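/- arXiv:1806.10578 — 4 statements merged into one kernel-verified Lean document; each statement's English description precedes it below -/
import Mathlib

section
/- Let B_{00}, B_{10}, B_{01}, B_{20}, B_{11}, B_{02} ∈ ℂ^{n×n}, Q(λ,μ) := B_{00} + λB_{10} + μB_{01} + λ²B_{20} + λμB_{11} + μ²B_{02}, and let H(λ,μ) ∈ ℂ^{3n×3n} be the linearization H(λ,μ) = [[B_{00},B_{10},B_{01}],[0,−I,0],[0,0,−I]] + λ[[0,B_{20},B_{11}],[I,0,0],[0,0,0]] + μ[[0,0,B_{02}],[0,0,0],[I,0,0]]. If z = (z_0, z_1, z_2) ∈ ℂ^n × ℂ^n × ℂ^n is nonzero and H(λ,μ)z = 0, then z_1 = λz_0, z_2 = μz_0, z_0 is nonzero, and Q(λ,μ)z_0 = 0. -/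
open Matrix

/-- Build a `3×3` block matrix from a function giving the `n×n` blocks. -/
def blk3 {n : ℕ} (f : Fin 3 → Fin 3 → Matrix (Fin n) (Fin n) ℂ) :
    Matrix (Fin 3 × Fin n) (Fin 3 × Fin n) ℂ :=
  fun p q => f p.1 q.1 p.2 q.2

/-- The quadratic polynomial matrix
`Q(λ,μ) = B₀₀ + λB₁₀ + μB₀₁ + λ²B₂₀ + λμB₁₁ + μ²B₀₂`. -/
def Qmat {n : ℕ} (B00 B10 B01 B20 B11 B02 : Matrix (Fin n) (Fin n) ℂ)
    (l m : ℂ) : Matrix (Fin n) (Fin n) ℂ :=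
  B00 + l • B10 + m • B01 + (l ^ 2) • B20 + (l * m) • B11 + (m ^ 2) • B02

/-- The `3n×3n` linearization
`H(λ,μ) = [[B₀₀,B₁₀,B₀₁],[0,−I,0],[0,0,−I]] + λ[[0,B₂₀,B₁₁],[I,0,0],[0,0,0]]
 + μ[[0,0,B₀₂],[0,0,0],[I,0,0]]`. -/
def Hmat {n : ℕ} (B00 B10 B01 B20 B11 B02 : Matrix (Fin n) (Fin n) ℂ)
    (l m : ℂ) : Matrix (Fin 3 × Fin n) (Fin 3 × Fin n) ℂ :=
  blk3 ![![B00, B10, B01], ![0, -1, 0], ![0, 0, -1]]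
    + l • blk3 ![![0, B20, B11], ![1, 0, 0], ![0, 0, 0]]
    + m • blk3 ![![0, 0, B02], ![0, 0, 0], ![1, 0, 0]]

/-- If `z = (z₀, z₁, z₂) ≠ 0` and `H(λ,μ)z = 0`, then
`z₁ = λz₀`, `z₂ = μz₀`, `z₀ ≠ 0`, and `Q(λ,μ)z₀ = 0`. -/
theorem linearization_eigvec_gives_QMEP_eigvec
    {n : ℕ} (B00 B10 B01 B20 B11 B02 : Matrix (Fin n) (Fin n) ℂ)
    (l m : ℂ) (z : Fin 3 × Fin n → ℂ) (hz : z ≠ 0)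
    (hHz : (Hmat B00 B10 B01 B20 B11 B02 l m).mulVec z = 0) :
    (fun j => z (1, j)) = l • (fun j => z (0, j)) ∧
      (fun j => z (2, j)) = m • (fun j => z (0, j)) ∧
      (fun j => z (0, j)) ≠ (0 : Fin n → ℂ) ∧
      (Qmat B00 B10 B01 B20 B11 B02 l m).mulVec (fun j => z (0, j)) = 0 := by
  have key : ∀ p : Fin 3 × Fin n,
      ∑ q : Fin 3 × Fin n, Hmat B00 B10 B01 B20 B11 B02 l m p q * z q = 0 := by
    intro p
    have := congrFun hHz p
    simpa [Matrix.mulVec, dotProduct] using this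
  have h1 : ∀ j : Fin n, z (1, j) = l * z (0, j) := by
    intro j
    have h := key (1, j)
    simp [Hmat, blk3, Fintype.sum_prod_type, Fin.sum_univ_three, Matrix.one_apply,
      Matrix.neg_apply, mul_ite, Finset.sum_ite_eq, Finset.sum_ite_eq'] at h
    linear_combination -h
  have h2 : ∀ j : Fin n, z (2, j) = m * z (0, j) := by
    intro j
    have h := key (2, j)
    simp [Hmat, blk3, Fintype.sum_prod_type, Fin.sum_univ_three, Matrix.one_apply,
      Matrix.neg_apply, mul_ite, Finset.sum_ite_eq, Finset.sum_ite_eq'] at h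
    linear_combination -h
  have h0 : (fun j => z (0, j)) ≠ (0 : Fin n → ℂ) := by
    intro h0
    apply hz
    funext p
    obtain ⟨i, j⟩ := p
    have hz0 : z (0, j) = 0 := congrFun h0 j
    fin_cases i <;> simp [h1 j, h2 j, hz0]
  refine ⟨funext h1, funext h2, h0, ?_⟩
  funext j
  have h := key (0, j)
  simp only [Hmat, blk3, Fintype.sum_prod_type, Fin.sum_univ_three, Matrix.cons_val_zero,
    Matrix.cons_val_one, Matrix.head_cons, Matrix.cons_val_two, Matrix.tail_cons,
    Matrix.zero_apply, Matrix.add_apply, Matrix.smul_apply, smul_eq_mul, mul_zero,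
    zero_mul, add_zero, zero_add] at h
  simp only [Qmat, Matrix.mulVec, dotProduct, Pi.zero_apply, Matrix.add_apply,
    Matrix.smul_apply, smul_eq_mul]
  rw [← h]
  rw [← Finset.sum_add_distrib, ← Finset.sum_add_distrib]
  apply Finset.sum_congr rfl
  intro q _
  rw [h1 q, h2 q]
  ring
end

section
/- Let B_{00}, B_{10}, B_{01}, B_{20}, B_{11}, B_{02} ∈ ℂ^{n×n}, Q(λ,μ) := B_{00} + λB_{10} + μB_{01} + λ²B_{20} + λμB_{11} + μ²B_{02}, and let H(λ,μ) ∈ ℂ^{3n×3n} be the linearization H(λ,μ) = [[B_{00},B_{10},B_{01}],[0,−I,0],[0,0,−I]] + λ[[0,B_{20},B_{11}],[I,0,0],[0,0,0]] + μ[[0,0,B_{02}],[0,0,0],[I,0,0]]. Then for all λ, μ ∈ ℂ, det H(λ,μ) = det Q(λ,μ). -/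
open Matrix

lemma blk3_mul {n : ℕ} (f g : Fin 3 → Fin 3 → Matrix (Fin n) (Fin n) ℂ) :
    blk3 f * blk3 g = blk3 (fun i j => ∑ k, f i k * g k j) := by
  ext ⟨i, x⟩ ⟨j, y⟩
  simp [blk3, Matrix.mul_apply, Fintype.sum_prod_type, Finset.sum_apply, Matrix.sum_apply]

def blkEquiv {n : ℕ} (k : Fin 3) : {p : Fin 3 × Fin n // p.1 = k} ≃ Fin n :=
  { toFun := fun p => p.1.2
    invFun := fun x => ⟨(k, x), rfl⟩
    left_inv := fun ⟨⟨a, b⟩, h⟩ => by subst h; rfl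
    right_inv := fun x => rfl }

lemma det_toSquareBlock_blk3 {n : ℕ} (f : Fin 3 → Fin 3 → Matrix (Fin n) (Fin n) ℂ)
    (k : Fin 3) :
    ((blk3 f).toSquareBlock Prod.fst k).det = (f k k).det := by
  have : (blk3 f).toSquareBlock Prod.fst k = (f k k).submatrix (blkEquiv k) (blkEquiv k) := by
    ext ⟨⟨a, b⟩, h⟩ ⟨⟨c, d⟩, h2⟩
    simp only [Fin.isValue] at h h2
    subst h; subst h2
    simp only [Matrix.toSquareBlock_def, Matrix.submatrix_apply, Matrix.of_apply,
      Equiv.coe_fn_mk, blk3, blkEquiv]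
  rw [this, Matrix.det_submatrix_equiv_self]

lemma det_blk3_upper {n : ℕ} (f : Fin 3 → Fin 3 → Matrix (Fin n) (Fin n) ℂ)
    (h10 : f 1 0 = 0) (h20 : f 2 0 = 0) (h21 : f 2 1 = 0) :
    (blk3 f).det = (f 0 0).det * (f 1 1).det * (f 2 2).det := by
  rcases Nat.eq_zero_or_pos n with hn | hn
  · subst hn
    have : IsEmpty (Fin 3 × Fin 0) := by infer_instance
    simp [Matrix.det_isEmpty]
  · have hbt : (blk3 f).BlockTriangular Prod.fst := by
      rintro ⟨i, x⟩ ⟨j, y⟩ hij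
      simp only at hij
      have : f i j = 0 := by
        fin_cases i <;> fin_cases j <;> first
          | exact absurd hij (by decide)
          | assumption
      simp [blk3, this]
    rw [hbt.det]
    have himg : (Finset.univ : Finset (Fin 3 × Fin n)).image Prod.fst = Finset.univ := by
      apply Finset.eq_univ_of_forall
      intro k
      exact Finset.mem_image.2 ⟨(k, ⟨0, hn⟩), Finset.mem_univ _, rfl⟩
    rw [himg]
    rw [Fin.prod_univ_three]
    simp [det_toSquareBlock_blk3]

lemma blk3_transpose {n : ℕ} (f : Fin 3 → Fin 3 → Matrix (Fin n) (Fin n) ℂ) :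
    (blk3 f)ᵀ = blk3 (fun i j => (f j i)ᵀ) := by
  ext ⟨i, x⟩ ⟨j, y⟩
  rfl

lemma det_blk3_lower {n : ℕ} (f : Fin 3 → Fin 3 → Matrix (Fin n) (Fin n) ℂ)
    (h01 : f 0 1 = 0) (h02 : f 0 2 = 0) (h12 : f 1 2 = 0) :
    (blk3 f).det = (f 0 0).det * (f 1 1).det * (f 2 2).det := by
  rw [← Matrix.det_transpose, blk3_transpose,
    det_blk3_upper _ (by simp [h01]) (by simp [h02]) (by simp [h12])]
  simp [Matrix.det_transpose]

lemma Hmat_eq {n : ℕ} (B00 B10 B01 B20 B11 B02 : Matrix (Fin n) (Fin n) ℂ) (l m : ℂ) :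
    (blk3 ![![B00, B10, B01], ![0, -1, 0], ![0, 0, -1]]
      + l • blk3 ![![0, B20, B11], ![1, 0, 0], ![0, 0, 0]]
      + m • blk3 ![![0, 0, B02], ![0, 0, 0], ![1, 0, 0]])
    = blk3 ![![B00, B10 + l • B20, B01 + l • B11 + m • B02],
             ![l • 1, -1, 0], ![m • 1, 0, -1]] := by
  ext ⟨i, x⟩ ⟨j, y⟩
  fin_cases i <;> fin_cases j <;>
    simp [blk3, Matrix.add_apply, Matrix.smul_apply, Matrix.vecHead, Matrix.vecTail]

/-- `det H(λ,μ) = det Q(λ,μ)` for all `λ, μ ∈ ℂ`. -/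
theorem det_linearization_eq_det_QMEP
    {n : ℕ} (B00 B10 B01 B20 B11 B02 : Matrix (Fin n) (Fin n) ℂ) :
    ∀ l m : ℂ,
      (Hmat B00 B10 B01 B20 B11 B02 l m).det =
        (Qmat B00 B10 B01 B20 B11 B02 l m).det := by
  intro l m
  set C1 := B10 + l • B20 with hC1
  set C2 := B01 + l • B11 + m • B02 with hC2
  have hH : Hmat B00 B10 B01 B20 B11 B02 l m =
      blk3 ![![B00, C1, C2], ![l • 1, -1, 0], ![m • 1, 0, -1]] := by
    rw [Hmat, Hmat_eq]
  set M := blk3 ![![(1 : Matrix (Fin n) (Fin n) ℂ), C1, C2], ![0, 1, 0], ![0, 0, 1]] with hM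
  have hMdet : M.det = 1 := by
    rw [hM, det_blk3_upper] <;>
      simp [Matrix.vecHead, Matrix.vecTail]
  have hprod : M * Hmat B00 B10 B01 B20 B11 B02 l m =
      blk3 ![![Qmat B00 B10 B01 B20 B11 B02 l m, 0, 0],
             ![l • 1, -1, 0], ![m • 1, 0, -1]] := by
    rw [hH, blk3_mul]
    refine congrArg blk3 ?_
    funext i j
    fin_cases i <;> fin_cases j <;>
      simp [Fin.sum_univ_three, Matrix.mul_smul, Matrix.mul_one, Qmat, hC1, hC2,
        Matrix.vecHead, Matrix.vecTail, smul_smul, pow_two, mul_comm] <;>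
      module
  have hdet : (M * Hmat B00 B10 B01 B20 B11 B02 l m).det =
      (Qmat B00 B10 B01 B20 B11 B02 l m).det * (-1 : Matrix (Fin n) (Fin n) ℂ).det
        * (-1 : Matrix (Fin n) (Fin n) ℂ).det := by
    rw [hprod, det_blk3_lower] <;> simp
  rw [Matrix.det_mul, hMdet, one_mul] at hdet
  have h1 : (-1 : Matrix (Fin n) (Fin n) ℂ).det = (-1 : ℂ) ^ n := by
    simp [Matrix.det_neg]
  have h2 : ((-1 : ℂ) ^ n) * ((-1 : ℂ) ^ n) = 1 := by
    rw [← pow_add]; exact Even.neg_one_pow ⟨n, rfl⟩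
  rw [hdet, h1, mul_assoc, h2, mul_one]
end

section
/- Let M, N ∈ ℂ^{n×n} and suppose β₀ ∈ ℂ is a simple root of χ(β) := det(M − βN), i.e. χ(β₀) = 0 and χ′(β₀) ≠ 0. If x ∈ ℂ^n is nonzero with (M − β₀N)x = 0 and y ∈ ℂ^n is nonzero with yᵀ(M − β₀N) = 0, then yᵀN x ≠ 0. -/
/-!
By Jacobi's formula, `χ'(β₀) = -tr (adj (M - β₀N) N)`. Since `M - β₀N` is singular, its adjugate
has its columns in the right kernel and its rows in the left kernel. A nonzero cofactor makes both
kernels one-dimensional, so the adjugate is either zero or `c • x yᵀ`; in either case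
`tr (adj (M - β₀N) N) = c • yᵀNx`.
-/

open Matrix Polynomial

namespace Matrix

variable {n : Type*}

theorem map_eval_map_C_sub_X_smul {R : Type*} [CommRing R] (M N : Matrix n n R) (β : R) :
    (M.map C - (X : R[X]) • N.map C).map (eval β) = M - β • N := by
  ext i j
  simp only [map_apply, sub_apply, smul_apply, smul_eq_mul, eval_sub, eval_mul, eval_C, eval_X,
    mul_comm β]

variable [Fintype n] [DecidableEq n]

section Jacobi

variable {R : Type*} [CommRing R]

theorem derivative_det_eq_sum_det_updateCol (P : Matrix n n R[X]) :
    derivative P.det = ∑ i, (P.updateCol i fun r ↦ derivative (P r i)).det := by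
  simp only [det_apply', map_sum, derivative_intCast_mul, derivative_prod_finset, Finset.mul_sum]
  rw [Finset.sum_comm]
  refine Finset.sum_congr rfl fun i _ ↦ Finset.sum_congr rfl fun σ _ ↦ ?_
  rw [← Finset.mul_prod_erase _ _ (Finset.mem_univ i), updateCol_self, mul_comm (derivative _)]
  congr 2
  exact Finset.prod_congr rfl fun j hj ↦ by rw [updateCol_ne (Finset.ne_of_mem_erase hj)]

/-- Jacobi's formula. -/
theorem derivative_det (P : Matrix n n R[X]) :
    derivative P.det = trace (adjugate P * P.map derivative) := by
  rw [derivative_det_eq_sum_det_updateCol]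
  refine Finset.sum_congr rfl fun i _ ↦ ?_
  rw [← cramer_apply, cramer_eq_adjugate_mulVec]
  rfl

theorem eval_det_map_C_sub_X_smul (M N : Matrix n n R) (β : R) :
    (M.map C - (X : R[X]) • N.map C).det.eval β = (M - β • N).det := by
  rw [← coe_evalRingHom, RingHom.map_det, RingHom.mapMatrix_apply, coe_evalRingHom,
    map_eval_map_C_sub_X_smul]

theorem eval_derivative_det_map_C_sub_X_smul (M N : Matrix n n R) (β : R) :
    (derivative (M.map C - (X : R[X]) • N.map C).det).eval β =
      -trace (adjugate (M - β • N) * N) := by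
  have hder : (M.map C - (X : R[X]) • N.map C).map derivative = -N.map C := by
    ext i j
    simp only [map_apply, sub_apply, smul_apply, neg_apply, smul_eq_mul, derivative_sub,
      derivative_C, derivative_mul, derivative_X, zero_sub, one_mul, mul_zero, add_zero]
  rw [derivative_det, hder, Matrix.mul_neg, trace_neg, eval_neg, ← coe_evalRingHom,
    AddMonoidHom.map_trace]
  congr 1
  change trace ((evalRingHom β).mapMatrix (_ * _)) = _
  rw [map_mul, RingHom.map_adjugate, RingHom.mapMatrix_apply, RingHom.mapMatrix_apply,
    coe_evalRingHom, map_eval_map_C_sub_X_smul, Matrix.map_map]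
  simp only [Function.comp_def, eval_C, map_id']

end Jacobi

section Kernel

variable {K : Type*} [Field K] {A : Matrix n n K} {k l : n}

theorem updateRow_single_mulVec_of_mulVec_eq_zero {v : n → K} (hv : A *ᵥ v = 0) :
    A.updateRow l (Pi.single k 1) *ᵥ v = v k • Pi.single l 1 := by
  rw [updateRow_mulVec, hv, single_one_dotProduct, ← Pi.single_smul', smul_eq_mul, mul_one]
  rfl

theorem exists_forall_mulVec_eq_zero_eq_smul (h : A.adjugate k l ≠ 0) :
    ∃ z, ∀ v, A *ᵥ v = 0 → v = v k • z := by
  -- `D` has the cofactor `A.adjugate k l` as determinant and sends a kernel vector `v` to `v k • eₗ`.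
  set D := A.updateRow l (Pi.single k 1)
  have hD : IsUnit D.det := by
    rw [← adjugate_apply]
    exact h.isUnit
  refine ⟨D⁻¹ *ᵥ Pi.single l 1, fun v hv ↦ ?_⟩
  calc v = D⁻¹ *ᵥ (D *ᵥ v) := by rw [mulVec_mulVec, nonsing_inv_mul _ hD, one_mulVec]
    _ = v k • D⁻¹ *ᵥ Pi.single l 1 := by
      rw [updateRow_single_mulVec_of_mulVec_eq_zero hv, mulVec_smul]

theorem exists_forall_vecMul_eq_zero_eq_smul (h : A.adjugate k l ≠ 0) :
    ∃ z, ∀ w, w ᵥ* A = 0 → w = w l • z := by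
  have h' : Aᵀ.adjugate l k ≠ 0 := by rwa [← adjugate_transpose, transpose_apply]
  simpa only [mulVec_transpose] using exists_forall_mulVec_eq_zero_eq_smul h'

theorem adjugate_eq_smul_vecMulVec (hA : A.det = 0) {x y : n → K} (hx : x ≠ 0)
    (hAx : A *ᵥ x = 0) (hy : y ≠ 0) (hyA : y ᵥ* A = 0) :
    ∃ c : K, A.adjugate = c • vecMulVec x y := by
  by_cases hB : A.adjugate = 0
  · exact ⟨0, by rw [hB, zero_smul]⟩
  obtain ⟨k, l, hkl⟩ : ∃ k l, A.adjugate k l ≠ 0 := by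
    by_contra! h
    exact hB (ext h)
  obtain ⟨z, hz⟩ := exists_forall_mulVec_eq_zero_eq_smul hkl
  obtain ⟨z', hz'⟩ := exists_forall_vecMul_eq_zero_eq_smul hkl
  have hcol (j : n) := hz (A.adjugate *ᵥ Pi.single j 1)
    (by rw [mulVec_mulVec, mul_adjugate, hA, zero_smul, zero_mulVec])
  have hrow := hz' (Pi.single k 1 ᵥ* A.adjugate)
    (by rw [vecMul_vecMul, adjugate_mul, hA, zero_smul, vecMul_zero])
  have hxz := hz x hAx
  have hyz := hz' y hyA
  have hxk : x k ≠ 0 := fun h ↦ hx (by rw [hxz, h, zero_smul])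
  have hyl : y l ≠ 0 := fun h ↦ hy (by rw [hyz, h, zero_smul])
  refine ⟨A.adjugate k l / (x k * y l), ext fun i j ↦ ?_⟩
  have hij := congrFun (hcol j) i
  have hkj := congrFun hrow j
  have hxi := congrFun hxz i
  have hyj := congrFun hyz j
  simp only [mulVec_single_one, single_one_vecMul, Pi.smul_apply, smul_eq_mul, col_apply,
    row_apply] at hij hkj hxi hyj
  rw [smul_apply, vecMulVec_apply, hij, hkj, hxi, hyj, smul_eq_mul]
  field_simp

end Kernel

end Matrix

/-- If `β₀` is a simple root of `χ(β) = det(M − βN)`, `x ≠ 0` is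
a right eigenvector and `y ≠ 0` a left eigenvector of the pencil at `β₀`, then
`yᵀNx ≠ 0`. -/
theorem left_right_eigvec_pairing_ne_zero_of_simple_root
    (n : ℕ) (M N : Matrix (Fin n) (Fin n) ℂ)
    (χ : Polynomial ℂ) (hχ : ∀ β : ℂ, χ.eval β = (M - β • N).det)
    (β₀ : ℂ) (hroot : χ.eval β₀ = 0)
    (hsimple : (derivative χ).eval β₀ ≠ 0)
    (x : Fin n → ℂ) (hx : x ≠ 0) (hMx : (M - β₀ • N).mulVec x = 0)
    (y : Fin n → ℂ) (hy : y ≠ 0) (hyM : Matrix.vecMul y (M - β₀ • N) = 0) :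
    y ⬝ᵥ N.mulVec x ≠ 0 := by
  have hχ_det : χ = (M.map C - (X : ℂ[X]) • N.map C).det :=
    Polynomial.funext fun β ↦ by rw [hχ, eval_det_map_C_sub_X_smul]
  have hdet : (M - β₀ • N).det = 0 := (hχ β₀).symm.trans hroot
  obtain ⟨c, hc⟩ := adjugate_eq_smul_vecMulVec hdet hx hMx hy hyM
  have htrace : trace (adjugate (M - β₀ • N) * N) = c * (y ⬝ᵥ N *ᵥ x) := by
    rw [hc, smul_mul, vecMulVec_mul, trace_smul, trace_vecMulVec, dotProduct_comm,
      ← dotProduct_mulVec, smul_eq_mul]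
  rw [hχ_det, eval_derivative_det_map_C_sub_X_smul, htrace] at hsimple
  exact right_ne_zero_of_mul (neg_ne_zero.mp hsimple)
end

section
/- Let M, N ∈ ℂ^{n×n} and suppose β₀ ∈ ℂ is a simple root of χ(β) := det(M − βN), i.e. χ(β₀) = 0 and χ′(β₀) ≠ 0. Let x ∈ ℂ^n be a nonzero vector with (M − β₀N)x = 0 and let d ∈ ℂ^n satisfy dᵀx = 1. Then the (n+1)×(n+1) matrix J whose first n rows are [−Nx | M − β₀N] (first column −Nx, remaining n columns M − β₀N) and whose last row is [0 | dᵀ] is invertible. That is, the solution (β₀, x) of the system (M − βN)x = 0, dᵀx = 1 is a regular (nonsingular-Jacobian) solution. -/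
/-!
Up to a permutation of rows, `J` is the bordered matrix `[[0, dᵀ], [-N x, M - β₀N]]`.
Right-multiplying `[[-1, dᵀ], [0, M - βN]]` by `[[1, 0], [x, I]]` adds to its first column the
combination of the others with coefficients `x`, giving `[[dᵀx - 1, dᵀ], [(M - βN) x, M - βN]]
= [[0, dᵀ], [-(β - β₀) N x, M - βN]]`, because `dᵀx = 1` and `(M - β₀N) x = 0`. Hence, as
polynomials in `β`, `-det (M - βN) = (β - β₀) · det [[0, dᵀ], [-N x, M - βN]]`, and
differentiating at `β₀` gives `χ'(β₀) = -det J ≠ 0`.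
-/

open Matrix Polynomial

namespace Matrix

variable {ι R : Type*} [CommRing R]

def borderedMatrix (u : ι → R) (A : Matrix ι ι R) (d : ι → R) :
    Matrix (Fin 1 ⊕ ι) (Fin 1 ⊕ ι) R :=
  fromBlocks 0 (replicateRow (Fin 1) d) (replicateCol (Fin 1) u) A

theorem borderedMatrix_map {S : Type*} [CommRing S] (f : R →+* S) (u : ι → R)
    (A : Matrix ι ι R) (d : ι → R) :
    (borderedMatrix u A d).map f = borderedMatrix (f ∘ u) (A.map f) (f ∘ d) := by
  rw [borderedMatrix, borderedMatrix, fromBlocks_map]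
  congr 1
  ext; simp

theorem map_evalRingHom_pencil (M N : Matrix ι ι R) (β : R) :
    (M.map C - (X : R[X]) • N.map C).map (evalRingHom β) = M - β • N := by
  ext
  simp only [coe_evalRingHom, map_apply, sub_apply, smul_apply, smul_eq_mul, X_mul_C, eval_sub,
    eval_C, eval_mul, eval_X, sub_right_inj]
  ring

variable [Fintype ι] [DecidableEq ι]

theorem eval_det_pencil (M N : Matrix ι ι R) (β : R) :
    (M.map C - (X : R[X]) • N.map C).det.eval β = (M - β • N).det := by
  rw [← coe_evalRingHom, RingHom.map_det, RingHom.mapMatrix_apply, map_evalRingHom_pencil]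

theorem mul_det_borderedMatrix {A : Matrix ι ι R} {u x d : ι → R} {c : R}
    (hAx : A *ᵥ x = c • u) (hdx : d ⬝ᵥ x = 1) :
    c * (borderedMatrix u A d).det = -A.det := by
  have hcolumn_op : fromBlocks (-1) (replicateRow (Fin 1) d) 0 A *
      fromBlocks 1 0 (replicateCol (Fin 1) x) 1 = borderedMatrix (c • u) A d := by
    rw [fromBlocks_multiply, borderedMatrix]
    congr 1
    · ext i j
      simp [Subsingleton.elim i j, replicateRow_mul_replicateCol, hdx]
    · simp
    · rw [← replicateCol_mulVec, hAx]; simp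
    · simp
  have hscale : borderedMatrix (c • u) A d = borderedMatrix u A d * fromBlocks (c • 1) 0 0 1 := by
    rw [borderedMatrix, borderedMatrix, fromBlocks_multiply]
    congr 1 <;> ext <;> simp
  simpa [mul_comm] using (congrArg det (hcolumn_op.trans hscale)).symm

theorem eval_derivative_det_pencil {M N : Matrix ι ι R} {β₀ : R} {x d : ι → R}
    (hMx : (M - β₀ • N) *ᵥ x = 0) (hdx : d ⬝ᵥ x = 1) :
    (derivative (M.map C - (X : R[X]) • N.map C).det).eval β₀ =
      -(borderedMatrix (-(N *ᵥ x)) (M - β₀ • N) d).det := by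
  set P := M.map C - (X : R[X]) • N.map C
  have hPx : P *ᵥ (C ∘ x) = (X - C β₀) • (C ∘ (-(N *ᵥ x))) := by
    have hM : M *ᵥ x = β₀ • (N *ᵥ x) := by
      rwa [sub_mulVec, smul_mulVec, sub_eq_zero] at hMx
    funext i
    simp only [P, sub_mulVec, smul_mulVec, Pi.sub_apply, Pi.smul_apply, ← RingHom.map_mulVec, hM,
      smul_eq_mul, map_mul, X_mul_C, Function.comp_apply, Pi.neg_apply, map_neg, mul_neg]
    ring
  have hdx' : (C ∘ d) ⬝ᵥ (C ∘ x) = 1 := by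
    rw [← RingHom.map_dotProduct, hdx, map_one]
  have hdet := mul_det_borderedMatrix hPx hdx'
  have heval : ((borderedMatrix (C ∘ (-(N *ᵥ x))) P (C ∘ d)).det).eval β₀ =
      (borderedMatrix (-(N *ᵥ x)) (M - β₀ • N) d).det := by
    rw [← coe_evalRingHom, RingHom.map_det, RingHom.mapMatrix_apply, borderedMatrix_map]
    congr 2
    · ext; simp
    · exact map_evalRingHom_pencil M N β₀
    · ext; simp
  rw [← neg_neg P.det, ← hdet, derivative_neg, derivative_mul]
  simp only [eval_neg, eval_add, eval_mul, derivative_X_sub_C, eval_sub, eval_X, eval_C,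
    sub_self, one_mul, zero_mul, add_zero, heval]

end Matrix

theorem start_solution_regular_jacobian_invertible_general
    (n : ℕ) (M N : Matrix (Fin n) (Fin n) ℂ)
    (χ : Polynomial ℂ) (hχ : ∀ β : ℂ, χ.eval β = (M - β • N).det)
    (β₀ : ℂ)
    (hsimple : (derivative χ).eval β₀ ≠ 0)
    (x : Fin n → ℂ) (hMx : (M - β₀ • N).mulVec x = 0)
    (d : Fin n → ℂ) (hd : d ⬝ᵥ x = 1) :
    IsUnit
      ((Matrix.fromBlocks
          (Matrix.of fun (i : Fin n) (_ : Fin 1) => -(N.mulVec x i))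
          (M - β₀ • N)
          (0 : Matrix (Fin 1) (Fin 1) ℂ)
          (Matrix.of fun (_ : Fin 1) (j : Fin n) => d j)).submatrix
        ⇑(Equiv.sumComm (Fin 1) (Fin n)) id) := by
  have hχ_det : χ = (M.map C - (X : ℂ[X]) • N.map C).det := 
    Polynomial.funext fun β => by rw [hχ, eval_det_pencil]
  have hdet : (borderedMatrix (-(N *ᵥ x)) (M - β₀ • N) d).det ≠ 0 := by
    rwa [← neg_ne_zero, ← eval_derivative_det_pencil hMx hd, ← hχ_det]
  refine (isUnit_iff_isUnit_det _).mpr (isUnit_iff_ne_zero.mpr ?_)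
  convert hdet using 2
  ext (i | i) (j | j) <;> simp [borderedMatrix]

/-- For a simple generalized eigenvalue `β₀` of the pencil
`M − βN`, with right eigenvector `x` normalized by `dᵀx = 1`, the Jacobian
`J = [[−Nx, M − β₀N], [0, dᵀ]]` of the system `(M − βN)x = 0, dᵀx = 1` with
respect to `(β, x)` is invertible (its first `n` rows are `[−Nx | M − β₀N]`
and its last row is `[0 | dᵀ]`). -/
theorem start_solution_regular_jacobian_invertible
    (n : ℕ) (M N : Matrix (Fin n) (Fin n) ℂ)
    (χ : Polynomial ℂ) (hχ : ∀ β : ℂ, χ.eval β = (M - β • N).det)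
    (β₀ : ℂ) (hroot : χ.eval β₀ = 0)
    (hsimple : (derivative χ).eval β₀ ≠ 0)
    (x : Fin n → ℂ) (hx : x ≠ 0) (hMx : (M - β₀ • N).mulVec x = 0)
    (d : Fin n → ℂ) (hd : d ⬝ᵥ x = 1) :
    IsUnit
      ((Matrix.fromBlocks
          (Matrix.of fun (i : Fin n) (_ : Fin 1) => -(N.mulVec x i))
          (M - β₀ • N)
          (0 : Matrix (Fin 1) (Fin 1) ℂ)
          (Matrix.of fun (_ : Fin 1) (j : Fin n) => d j)).submatrix
        ⇑(Equiv.sumComm (Fin 1) (Fin n)) id) :=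
  start_solution_regular_jacobian_invertible_general n M N χ hχ β₀ hsimple x hMx d hd
end
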